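/- arXiv:math/0703745 — 3 statements merged into one kernel-verified Lean document; each statement's English description precedes it below -/
import Mathlib

section
/- The trip counts satisfy the recurrence Trip_{N+1} = 4·Trip_N + 2^N - 1 for all N ≥ 2. -/
/-- `tripCount N`: the number of associative triples (unordered triples `{a,b,c}` of
distinct nonzero indices below `2^N` with `a XOR b = c`), represented canonically
by sorted triples `a < b < c`. -/
def tripCount (N : ℕ) : ℕ :=
  ((Finset.range (2 ^ N) ×ˢ Finset.range (2 ^ N) ×ˢ Finset.range (2 ^ N)).filter
    (fun t => 0 < t.1 ∧ t.1 < t.2.1 ∧ t.2.1 < t.2.2 ∧ t.1 ^^^ t.2.1 = t.2.2)).card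

open Finset

/-- The six ordered pairs from a triple. -/
def pairs6 (t : ℕ × ℕ × ℕ) : Finset (ℕ × ℕ) :=
  {(t.1, t.2.1), (t.2.1, t.1), (t.1, t.2.2), (t.2.2, t.1), (t.2.1, t.2.2), (t.2.2, t.2.1)}

/-- Sort three naturals. -/
def sort3 (a b c : ℕ) : ℕ × ℕ × ℕ :=
  (min a (min b c), max (min a b) (min (max a b) c), max a (max b c))

lemma xor_ca {a b c : ℕ} (h : a ^^^ b = c) : c ^^^ a = b := by
  rw [← h, Nat.xor_comm a b, Nat.xor_xor_cancel_right]

lemma xor_ac {a b c : ℕ} (h : a ^^^ b = c) : a ^^^ c = b := by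
  rw [← h, Nat.xor_xor_cancel_left]

lemma xor_cb {a b c : ℕ} (h : a ^^^ b = c) : c ^^^ b = a := by
  rw [← h, Nat.xor_xor_cancel_right]

lemma xor_bc {a b c : ℕ} (h : a ^^^ b = c) : b ^^^ c = a := by
  rw [← h, Nat.xor_comm a b, Nat.xor_xor_cancel_left]

lemma sort3_pairs6 {x y z : ℕ} (h1 : x < y) (h2 : y < z) (hx : x ^^^ y = z)
    {p : ℕ × ℕ} (hp : p ∈ pairs6 (x, y, z)) : sort3 p.1 p.2 (p.1 ^^^ p.2) = (x, y, z) := by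
  obtain ⟨a, b⟩ := p
  simp only [pairs6, mem_insert, mem_singleton, Prod.mk.injEq] at hp
  rcases hp with ⟨rfl, rfl⟩ | ⟨rfl, rfl⟩ | ⟨rfl, rfl⟩ | ⟨rfl, rfl⟩ | ⟨rfl, rfl⟩ | ⟨rfl, rfl⟩ <;>
  · first
    | (rw [hx]; simp only [sort3, Prod.mk.injEq]; omega)
    | (rw [Nat.xor_comm, hx]; simp only [sort3, Prod.mk.injEq]; omega)
    | (rw [xor_ac hx]; simp only [sort3, Prod.mk.injEq]; omega)
    | (rw [xor_ca hx]; simp only [sort3, Prod.mk.injEq]; omega)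
    | (rw [xor_bc hx]; simp only [sort3, Prod.mk.injEq]; omega)
    | (rw [xor_cb hx]; simp only [sort3, Prod.mk.injEq]; omega)

lemma six_mul_tripCount (N : ℕ) : 6 * tripCount N = (2 ^ N - 1) * (2 ^ N - 2) := by
  classical
  set n := 2 ^ N with hn
  have hn0 : 0 < n := Nat.pow_pos (by norm_num)
  set T := ((Finset.range n ×ˢ Finset.range n ×ˢ Finset.range n).filter
    (fun t => 0 < t.1 ∧ t.1 < t.2.1 ∧ t.2.1 < t.2.2 ∧ t.1 ^^^ t.2.1 = t.2.2)) with hT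
  have hTmem : ∀ x y z : ℕ, (x, y, z) ∈ T ↔
      x < n ∧ y < n ∧ z < n ∧ 0 < x ∧ x < y ∧ y < z ∧ x ^^^ y = z := by
    intro x y z
    simp [hT, Finset.mem_filter, Finset.mem_product, and_assoc]
  -- the set of ordered pairs
  have hcover : ((Finset.range n).erase 0).offDiag = T.biUnion pairs6 := by
    ext p
    obtain ⟨a, b⟩ := p
    simp only [Finset.mem_offDiag, Finset.mem_erase, Finset.mem_range, Finset.mem_biUnion]
    constructor
    · rintro ⟨⟨ha0, han⟩, ⟨hb0, hbn⟩, hab⟩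
      set c := a ^^^ b with hc
      have hxor : a ^^^ b = c := rfl
      have hcn : c < n := Nat.xor_lt_two_pow han hbn
      have hc0 : c ≠ 0 := Nat.xor_ne_zero_iff.mpr hab
      have hca : c ≠ a := by
        intro h
        apply hb0
        have := xor_ca hxor
        rw [h, Nat.xor_self] at this
        omega
      have hcb : c ≠ b := by
        intro h
        apply ha0
        have := xor_cb hxor
        rw [h, Nat.xor_self] at this
        omega
      rcases Ne.lt_or_gt hab with h1 | h1
      · rcases Ne.lt_or_gt hca with h2 | h2
        · -- c < a < b
          exact ⟨(c, a, b), (hTmem c a b).mpr ⟨hcn, han, hbn, by omega, by omega, by omega,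
            xor_ca hxor⟩, by simp [pairs6]⟩
        · rcases Ne.lt_or_gt hcb with h3 | h3
          · -- a < c < b
            exact ⟨(a, c, b), (hTmem a c b).mpr ⟨han, hcn, hbn, by omega, by omega, by omega,
              xor_ac hxor⟩, by simp [pairs6]⟩
          · -- a < b < c
            exact ⟨(a, b, c), (hTmem a b c).mpr ⟨han, hbn, hcn, by omega, by omega, by omega,
              hxor⟩, by simp [pairs6]⟩
      · rcases Ne.lt_or_gt hcb with h2 | h2
        · -- c < b < a
          exact ⟨(c, b, a), (hTmem c b a).mpr ⟨hcn, hbn, han, by omega, by omega, by omega,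
            xor_cb hxor⟩, by simp [pairs6]⟩
        · rcases Ne.lt_or_gt hca with h3 | h3
          · -- b < c < a
            exact ⟨(b, c, a), (hTmem b c a).mpr ⟨hbn, hcn, han, by omega, by omega, by omega,
              xor_bc hxor⟩, by simp [pairs6]⟩
          · -- b < a < c
            exact ⟨(b, a, c), (hTmem b a c).mpr ⟨hbn, han, hcn, by omega, by omega, by omega,
              by rw [Nat.xor_comm]⟩, by simp [pairs6]⟩
    · rintro ⟨t, ht, hpt⟩
      obtain ⟨x, y, z⟩ := t
      obtain ⟨hx, hy, hz, h0, h1, h2, _⟩ := (hTmem x y z).mp ht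
      simp only [pairs6, mem_insert, mem_singleton, Prod.mk.injEq] at hpt
      rcases hpt with ⟨rfl, rfl⟩ | ⟨rfl, rfl⟩ | ⟨rfl, rfl⟩ | ⟨rfl, rfl⟩ | ⟨rfl, rfl⟩ |
        ⟨rfl, rfl⟩ <;> refine ⟨⟨by omega, by omega⟩, ⟨by omega, by omega⟩, by omega⟩
  have hdisj : (T : Set (ℕ × ℕ × ℕ)).PairwiseDisjoint pairs6 := by
    intro t ht t' ht' hne
    simp only [Finset.mem_coe] at ht ht'
    refine Finset.disjoint_left.mpr fun p hp hp' => hne ?_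
    obtain ⟨x, y, z⟩ := t
    obtain ⟨x', y', z'⟩ := t'
    obtain ⟨_, _, _, _, h1, h2, hx⟩ := (hTmem x y z).mp ht
    obtain ⟨_, _, _, _, h1', h2', hx'⟩ := (hTmem x' y' z').mp ht'
    have e1 := sort3_pairs6 h1 h2 hx hp
    have e2 := sort3_pairs6 h1' h2' hx' hp'
    rw [← e1, ← e2]
  have hcard6 : ∀ t ∈ T, (pairs6 t).card = 6 := by
    intro t ht
    obtain ⟨x, y, z⟩ := t
    obtain ⟨_, _, _, _, h1, h2, _⟩ := (hTmem x y z).mp ht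
    simp only [pairs6]
    rw [Finset.card_insert_of_notMem (by simp [Prod.ext_iff]; omega),
      Finset.card_insert_of_notMem (by simp [Prod.ext_iff]; omega),
      Finset.card_insert_of_notMem (by simp [Prod.ext_iff]; omega),
      Finset.card_insert_of_notMem (by simp [Prod.ext_iff]; omega),
      Finset.card_insert_of_notMem (by simp [Prod.ext_iff]; omega),
      Finset.card_singleton]
  have hkey : (((Finset.range n).erase 0).offDiag).card = 6 * T.card := by
    rw [hcover, Finset.card_biUnion hdisj]
    rw [Finset.sum_congr rfl hcard6, Finset.sum_const, smul_eq_mul, mul_comm]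
  have herase : ((Finset.range n).erase 0).card = n - 1 := by
    rw [Finset.card_erase_of_mem (Finset.mem_range.mpr hn0), Finset.card_range]
  rw [Finset.offDiag_card, herase] at hkey
  have hTc : tripCount N = T.card := rfl
  have hmul : (n - 1) * (n - 1) - (n - 1) = (n - 1) * (n - 2) := by
    rcases n with _ | _ | m
    · simp
    · simp
    · rw [show m + 1 + 1 - 1 = m + 1 from by omega, show m + 1 + 1 - 2 = m from by omega]
      have : (m + 1) * (m + 1) = (m + 1) * m + (m + 1) := by ring
      omega
  rw [hmul] at hkey
  omega

theorem trip_count_recurrence (N : ℕ) (hN : 2 ≤ N) :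
    tripCount (N + 1) = 4 * tripCount N + 2 ^ N - 1 := by
  have h1 := six_mul_tripCount (N + 1)
  have h2 := six_mul_tripCount N
  have hn : 4 ≤ 2 ^ N := by
    calc (4 : ℕ) = 2 ^ 2 := by norm_num
    _ ≤ 2 ^ N := Nat.pow_le_pow_right (by norm_num) hN
  obtain ⟨k, hk⟩ : ∃ k, 2 ^ N = k + 4 := ⟨2 ^ N - 4, by omega⟩
  rw [pow_succ] at h1
  rw [hk] at h1 h2 ⊢
  rw [show (k + 4) * 2 - 1 = 2 * k + 7 from by omega,
    show (k + 4) * 2 - 2 = 2 * k + 6 from by omega] at h1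
  rw [show k + 4 - 1 = k + 3 from by omega, show k + 4 - 2 = k + 2 from by omega] at h2
  have h3 : 6 * tripCount (N + 1) = 4 * (6 * tripCount N) + 6 * k + 18 := by
    rw [h1, h2]; ring
  omega
end

section
/- Every trip of the 2^{N+1}-ions is of exactly one of three forms: (i) all three indices below G = 2^N; (ii) exactly one index below G and that index nonzero, with the other two of the form G + x, G + y, where the low parts x, y together with the low index form a trip below G; (iii) one of the high indices has low part 0, i.e., the trip contains G itself; and consequently Trip_{N+1} = Trip_N + (2^N - 1) + 3·Trip_N. -/
theorem two_pow_xor_eq_add {n x : ℕ} (hx : x < 2 ^ n) : 2 ^ n ^^^ x = 2 ^ n + x := by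
  apply Nat.eq_of_testBit_eq
  intro j
  rcases lt_trichotomy j n with h | h | h
  · rw [Nat.testBit_xor, Nat.testBit_two_pow_of_ne (by omega),
      Nat.testBit_two_pow_add_gt h]
    simp
  · subst h
    rw [Nat.testBit_xor, Nat.testBit_two_pow_self, Nat.testBit_two_pow_add_eq,
      Nat.testBit_lt_two_pow hx]
    rfl
  · have h1 : x < 2 ^ j := lt_of_lt_of_le hx (Nat.pow_le_pow_right (by norm_num) h.le)
    have h2 : 2 ^ n + x < 2 ^ j := by
      have e1 : 2 ^ (n+1) ≤ 2 ^ j := Nat.pow_le_pow_right (by norm_num) h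
      have e2 : 2 ^ n + x < 2 ^ (n+1) := by rw [pow_succ]; omega
      omega
    rw [Nat.testBit_xor, Nat.testBit_two_pow_of_ne (by omega),
      Nat.testBit_lt_two_pow h1, Nat.testBit_lt_two_pow h2]
    rfl

theorem add_two_pow_xor {n x : ℕ} (hx : x < 2 ^ n) : (2 ^ n + x) ^^^ 2 ^ n = x := by
  rw [← two_pow_xor_eq_add hx, Nat.xor_comm (2 ^ n) x, Nat.xor_xor_cancel_right]

theorem hi_xor_two_pow {n b : ℕ} (h1 : 2 ^ n ≤ b) (h2 : b < 2 ^ (n+1)) :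
    b ^^^ 2 ^ n = b - 2 ^ n := by
  have hx : b - 2 ^ n < 2 ^ n := by rw [pow_succ] at h2; omega
  have := add_two_pow_xor hx
  rwa [Nat.add_sub_cancel' h1] at this

theorem xor_lo_hi {N x y : ℕ} (hx : x < 2 ^ N) (hy : y < 2 ^ N) :
    x ^^^ (2 ^ N + y) = 2 ^ N + (x ^^^ y) := by
  rw [← two_pow_xor_eq_add hy, ← two_pow_xor_eq_add (Nat.xor_lt_two_pow hx hy),
    ← Nat.xor_assoc, Nat.xor_comm x (2 ^ N), Nat.xor_assoc]

theorem classify (N : ℕ) (a b c : ℕ) (ha : 0 < a) (hab : a < b) (hbc : b < c)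
    (hc : c < 2 ^ (N + 1)) (hx : a ^^^ b = c) :
    (c < 2 ^ N ∧ ¬b = 2 ^ N ∧
        ¬(a < 2 ^ N ∧ 2 ^ N < b ∧ 0 < b ^^^ 2 ^ N ∧ 0 < c ^^^ 2 ^ N ∧
          a ^^^ (b ^^^ 2 ^ N) = c ^^^ 2 ^ N)) ∨
     (b = 2 ^ N ∧ c = 2 ^ N + a ∧ ¬c < 2 ^ N ∧
        ¬(a < 2 ^ N ∧ 2 ^ N < b ∧ 0 < b ^^^ 2 ^ N ∧ 0 < c ^^^ 2 ^ N ∧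
          a ^^^ (b ^^^ 2 ^ N) = c ^^^ 2 ^ N)) ∨
     ((a < 2 ^ N ∧ 2 ^ N < b ∧ 0 < b ^^^ 2 ^ N ∧ 0 < c ^^^ 2 ^ N ∧
          a ^^^ (b ^^^ 2 ^ N) = c ^^^ 2 ^ N ∧ b ^^^ 2 ^ N < 2 ^ N ∧ c ^^^ 2 ^ N < 2 ^ N) ∧
        ¬c < 2 ^ N ∧ ¬b = 2 ^ N) := by
  by_cases hcG : c < 2 ^ N
  · exact Or.inl ⟨hcG, by omega, fun ⟨_, hGb, _⟩ => by omega⟩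
  · push_neg at hcG
    have haG : a < 2 ^ N := by
      by_contra h
      push_neg at h
      have hb2 : b < 2 ^ (N+1) := hbc.trans hc
      have ha2 : a < 2 ^ (N+1) := hab.trans hb2
      have ea : a = 2 ^ N + (a - 2 ^ N) := by omega
      have eb : b = 2 ^ N + (b - 2 ^ N) := by omega
      have hlta : a - 2 ^ N < 2 ^ N := by rw [pow_succ] at ha2; omega
      have hltb : b - 2 ^ N < 2 ^ N := by rw [pow_succ] at hb2; omega
      have : a ^^^ b = (a - 2 ^ N) ^^^ (b - 2 ^ N) := by
        conv_lhs => rw [ea, eb, ← two_pow_xor_eq_add hlta, ← two_pow_xor_eq_add hltb]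
        rw [Nat.xor_comm (2 ^ N) (a - 2 ^ N), Nat.xor_assoc, Nat.xor_xor_cancel_left]
      have hlt : a ^^^ b < 2 ^ N := this ▸ Nat.xor_lt_two_pow hlta hltb
      omega
    have hbG : 2 ^ N ≤ b := by
      by_contra h
      push_neg at h
      have := Nat.xor_lt_two_pow haG h
      omega
    have hb2 : b < 2 ^ (N+1) := hbc.trans hc
    rcases eq_or_lt_of_le hbG with hbe | hbl
    · have hce : c = 2 ^ N + a := by
        rw [← hx, ← hbe, Nat.xor_comm]
        exact two_pow_xor_eq_add haG
      refine Or.inr (Or.inl ⟨hbe.symm, hce, by omega, ?_⟩)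
      rintro ⟨-, -, hu, -, -⟩
      rw [← hbe, Nat.xor_self] at hu
      omega
    · have hu : b ^^^ 2 ^ N = b - 2 ^ N := hi_xor_two_pow hbG hb2
      have hv : c ^^^ 2 ^ N = c - 2 ^ N := hi_xor_two_pow hcG hc
      have hultG : b - 2 ^ N < 2 ^ N := by rw [pow_succ] at hb2; omega
      have hvltG : c - 2 ^ N < 2 ^ N := by rw [pow_succ] at hc; omega
      have hw : a ^^^ (b - 2 ^ N) < 2 ^ N := Nat.xor_lt_two_pow haG hultG
      have hc2 : c = 2 ^ N + (a ^^^ (b - 2 ^ N)) := by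
        rw [← two_pow_xor_eq_add hw, ← hx]
        conv_lhs => rw [show b = 2 ^ N ^^^ (b - 2 ^ N) by rw [two_pow_xor_eq_add hultG]; omega]
        rw [← Nat.xor_assoc, Nat.xor_comm a (2 ^ N), Nat.xor_assoc]
      have hkey : a ^^^ (b ^^^ 2 ^ N) = c ^^^ 2 ^ N := by
        rw [hu, hv]; omega
      have hvpos : 0 < c ^^^ 2 ^ N := by rw [hv]; omega
      exact Or.inr (Or.inr ⟨⟨haG, hbl, by omega, hvpos, hkey, by omega, by omega⟩,
        by omega, by omega⟩)

def tripSet (N : ℕ) : Finset (ℕ × ℕ × ℕ) :=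
  (Finset.range (2 ^ N) ×ˢ Finset.range (2 ^ N) ×ˢ Finset.range (2 ^ N)).filter
    (fun t => 0 < t.1 ∧ t.1 < t.2.1 ∧ t.2.1 < t.2.2 ∧ t.1 ^^^ t.2.1 = t.2.2)

theorem tripCount_eq (N : ℕ) : tripCount N = (tripSet N).card := rfl

theorem mem_tripSet {N : ℕ} {t : ℕ × ℕ × ℕ} :
    t ∈ tripSet N ↔ 0 < t.1 ∧ t.1 < t.2.1 ∧ t.2.1 < t.2.2 ∧ t.2.2 < 2 ^ N ∧
      t.1 ^^^ t.2.1 = t.2.2 := by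
  simp only [tripSet, Finset.mem_filter, Finset.mem_product, Finset.mem_range]
  constructor
  · rintro ⟨⟨h1, h2, h3⟩, h4, h5, h6, h7⟩
    exact ⟨h4, h5, h6, h3, h7⟩
  · rintro ⟨h4, h5, h6, h3, h7⟩
    exact ⟨⟨by omega, by omega, h3⟩, h4, h5, h6, h7⟩

theorem partA (N : ℕ) :
    (tripSet (N+1)).filter (fun t => t.2.2 < 2 ^ N) = tripSet N := by
  have hle : 2 ^ N ≤ 2 ^ (N+1) := Nat.pow_le_pow_right (by norm_num) (by omega)
  ext t
  simp only [Finset.mem_filter, mem_tripSet]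
  constructor
  · rintro ⟨⟨h1, h2, h3, h4, h5⟩, h6⟩
    exact ⟨h1, h2, h3, h6, h5⟩
  · rintro ⟨h1, h2, h3, h4, h5⟩
    exact ⟨⟨h1, h2, h3, by omega, h5⟩, h4⟩

theorem partB (N : ℕ) :
    (((tripSet (N+1)).filter (fun t => ¬ t.2.2 < 2 ^ N)).filter
      (fun t => t.2.1 = 2 ^ N)).card = 2 ^ N - 1 := by
  have hps : (2:ℕ) ^ (N+1) = 2 ^ N + 2 ^ N := by rw [pow_succ]; omega
  rw [show (2:ℕ) ^ N - 1 = (Finset.Ico 1 (2 ^ N)).card by rw [Nat.card_Ico]]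
  symm
  apply Finset.card_bij (fun a _ => (a, 2 ^ N, 2 ^ N + a))
  · intro a ha
    simp only [Finset.mem_Ico] at ha
    simp only [Finset.mem_filter, mem_tripSet]
    refine ⟨⟨⟨by omega, by omega, by omega, by omega, ?_⟩, by omega⟩, by trivial⟩
    rw [Nat.xor_comm]
    exact two_pow_xor_eq_add (by omega)
  · intro a ha b hb h
    simpa using congrArg Prod.fst h
  · rintro ⟨a, b, c⟩ ht
    simp only [Finset.mem_filter, mem_tripSet] at ht
    obtain ⟨⟨⟨h1, h2, h3, h4, h5⟩, h6⟩, h7⟩ := ht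
    refine ⟨a, Finset.mem_Ico.2 ⟨by omega, by omega⟩, ?_⟩
    have : c = 2 ^ N + a := by
      rw [← h5, h7, Nat.xor_comm]
      exact two_pow_xor_eq_add (by omega)
    simp [h7, this]

theorem e00 : ((0:ℕ) = 0) = True := by simp
theorem e10 : ((1:ℕ) = 0) = False := by simp
theorem e11 : ((1:ℕ) = 1) = True := by simp
theorem e20 : ((2:ℕ) = 0) = False := by simp
theorem e21 : ((2:ℕ) = 1) = False := by simp

def Cset (N : ℕ) : Finset (ℕ × ℕ × ℕ) :=
  ((tripSet (N+1)).filter (fun t => ¬ t.2.2 < 2 ^ N)).filter (fun t => ¬ t.2.1 = 2 ^ N)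

def fwd (N : ℕ) (p : ℕ × ℕ × ℕ × ℕ) : ℕ × ℕ × ℕ :=
  if p.1 = 0 then (p.2.1, 2 ^ N + p.2.2.1, 2 ^ N + p.2.2.2)
  else if p.1 = 1 then (p.2.2.1, 2 ^ N + p.2.1, 2 ^ N + p.2.2.2)
  else (p.2.2.2, 2 ^ N + p.2.1, 2 ^ N + p.2.2.1)

def bwd (N : ℕ) (t : ℕ × ℕ × ℕ) : ℕ × ℕ × ℕ × ℕ :=
  if t.1 < t.2.1 ^^^ 2 ^ N then (0, (t.1, t.2.1 ^^^ 2 ^ N, t.2.2 ^^^ 2 ^ N))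
  else if t.1 < t.2.2 ^^^ 2 ^ N then (1, (t.2.1 ^^^ 2 ^ N, t.1, t.2.2 ^^^ 2 ^ N))
  else (2, (t.2.1 ^^^ 2 ^ N, t.2.2 ^^^ 2 ^ N, t.1))

theorem mem_Cset {N : ℕ} {t : ℕ × ℕ × ℕ} :
    t ∈ Cset N ↔ (0 < t.1 ∧ t.1 < t.2.1 ∧ t.2.1 < t.2.2 ∧ t.2.2 < 2 ^ (N+1) ∧
      t.1 ^^^ t.2.1 = t.2.2) ∧ ¬ t.2.2 < 2 ^ N ∧ ¬ t.2.1 = 2 ^ N := by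
  simp only [Cset, Finset.mem_filter, mem_tripSet, and_assoc]

theorem Cset_facts {N : ℕ} {a b c : ℕ} (ht : (a, b, c) ∈ Cset N) :
    0 < a ∧ a < b ∧ b < c ∧ c < 2 ^ (N+1) ∧ a ^^^ b = c ∧
    a < 2 ^ N ∧ 2 ^ N < b ∧ 0 < b ^^^ 2 ^ N ∧ 0 < c ^^^ 2 ^ N ∧
    a ^^^ (b ^^^ 2 ^ N) = c ^^^ 2 ^ N ∧ b ^^^ 2 ^ N < 2 ^ N ∧ c ^^^ 2 ^ N < 2 ^ N ∧
    2 ^ N + (b ^^^ 2 ^ N) = b ∧ 2 ^ N + (c ^^^ 2 ^ N) = c ∧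
    a ≠ b ^^^ 2 ^ N ∧ a ≠ c ^^^ 2 ^ N ∧ b ^^^ 2 ^ N < c ^^^ 2 ^ N := by
  rw [mem_Cset] at ht
  simp only at ht
  obtain ⟨⟨h1, h2, h3, h4, h5⟩, h6, h7⟩ := ht
  rcases classify N a b c h1 h2 h3 h4 h5 with h | h | h
  · exact absurd h.1 h6
  · exact absurd h.1 h7
  obtain ⟨⟨haG, hbl, hupos, hvpos, hkey, hultG, hvltG⟩, -, -⟩ := h
  have hub : 2 ^ N + (b ^^^ 2 ^ N) = b := by
    rw [hi_xor_two_pow (by omega) (h3.trans h4)]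
    omega
  have hvc : 2 ^ N + (c ^^^ 2 ^ N) = c := by
    rw [hi_xor_two_pow (by omega) h4]
    omega
  have hau : a ≠ b ^^^ 2 ^ N := by
    intro he
    rw [← he, Nat.xor_self] at hkey
    omega
  have hav : a ≠ c ^^^ 2 ^ N := by
    intro he
    rw [he] at hkey
    have h9 : (c ^^^ 2 ^ N) ^^^ (b ^^^ 2 ^ N) = (c ^^^ 2 ^ N) ^^^ 0 := by
      rw [hkey, Nat.xor_zero]
    have := Nat.xor_right_inj.1 h9
    omega
  exact ⟨h1, h2, h3, h4, h5, haG, hbl, hupos, hvpos, hkey, hultG, hvltG,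
    hub, hvc, hau, hav, by omega⟩

theorem fwd_mem (N : ℕ) : ∀ p ∈ Finset.range 3 ×ˢ tripSet N, fwd N p ∈ Cset N := by
  rintro ⟨k, x, y, z⟩ hp
  simp only [Finset.mem_product, Finset.mem_range, mem_tripSet] at hp
  obtain ⟨hk, h1, h2, h3, h4, h5⟩ := hp
  have hx : x < 2 ^ N := by omega
  have hy : y < 2 ^ N := by omega
  have hzx : z ^^^ x = y := by rw [← h5, Nat.xor_comm x y, Nat.xor_xor_cancel_right]
  have hps : (2:ℕ) ^ (N+1) = 2 ^ N + 2 ^ N := by rw [pow_succ]; omega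
  interval_cases k
  · have hxe : x ^^^ (2 ^ N + y) = 2 ^ N + z := by rw [xor_lo_hi hx hy, h5]
    simp only [fwd, e00, e10, e11, e20, e21, if_true, if_false, mem_Cset, hxe, and_true, true_and]
    omega
  · have hxe : y ^^^ (2 ^ N + x) = 2 ^ N + z := by
      rw [xor_lo_hi hy hx, Nat.xor_comm y x, h5]
    simp only [fwd, e00, e10, e11, e20, e21, if_true, if_false, mem_Cset, hxe, and_true, true_and]
    omega
  · have hxe : z ^^^ (2 ^ N + x) = 2 ^ N + y := by rw [xor_lo_hi h4 hx, hzx]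
    simp only [fwd, e00, e10, e11, e20, e21, if_true, if_false, mem_Cset, hxe, and_true, true_and]
    omega

theorem bwd_mem (N : ℕ) : ∀ t ∈ Cset N, bwd N t ∈ Finset.range 3 ×ˢ tripSet N := by
  rintro ⟨a, b, c⟩ ht
  obtain ⟨h1, h2, h3, h4, h5, haG, hbl, hupos, hvpos, hkey, hultG, hvltG,
    hub, hvc, hau, hav, huv⟩ := Cset_facts ht
  by_cases c1 : a < b ^^^ 2 ^ N
  · simp only [bwd, if_pos c1, Finset.mem_product, Finset.mem_range, mem_tripSet, hkey, and_true, true_and]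
    omega
  · by_cases c2 : a < c ^^^ 2 ^ N
    · have hkey' : (b ^^^ 2 ^ N) ^^^ a = c ^^^ 2 ^ N := by rw [Nat.xor_comm]; exact hkey
      simp only [bwd, if_neg c1, if_pos c2, Finset.mem_product, Finset.mem_range,
        mem_tripSet, hkey', and_true, true_and]
      omega
    · have hkey'' : (b ^^^ 2 ^ N) ^^^ (c ^^^ 2 ^ N) = a := by
        rw [← hkey, ← Nat.xor_assoc, Nat.xor_comm (b ^^^ 2 ^ N) a, Nat.xor_assoc,
          Nat.xor_self, Nat.xor_zero]
      simp only [bwd, if_neg c1, if_neg c2, Finset.mem_product, Finset.mem_range,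
        mem_tripSet, hkey'', and_true, true_and]
      omega

theorem bwd_fwd (N : ℕ) : ∀ p ∈ Finset.range 3 ×ˢ tripSet N, bwd N (fwd N p) = p := by
  rintro ⟨k, x, y, z⟩ hp
  simp only [Finset.mem_product, Finset.mem_range, mem_tripSet] at hp
  obtain ⟨hk, h1, h2, h3, h4, h5⟩ := hp
  have hx : x < 2 ^ N := by omega
  have hy : y < 2 ^ N := by omega
  have ey : (2 ^ N + y) ^^^ 2 ^ N = y := add_two_pow_xor hy
  have ex : (2 ^ N + x) ^^^ 2 ^ N = x := add_two_pow_xor hx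
  have ez : (2 ^ N + z) ^^^ 2 ^ N = z := add_two_pow_xor h4
  interval_cases k
  · simp only [fwd, bwd, e00, e10, e11, e20, e21, if_true, if_false, ey, ez, if_pos h2]
  · simp only [fwd, bwd, e00, e10, e11, e20, e21, if_true, if_false, ex, ez, if_neg (by omega : ¬ y < x),
      if_pos (by omega : y < z)]
  · simp only [fwd, bwd, e00, e10, e11, e20, e21, if_true, if_false, ex, ey, if_neg (by omega : ¬ z < x),
      if_neg (by omega : ¬ z < y)]

theorem fwd_bwd (N : ℕ) : ∀ t ∈ Cset N, fwd N (bwd N t) = t := by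
  rintro ⟨a, b, c⟩ ht
  obtain ⟨h1, h2, h3, h4, h5, haG, hbl, hupos, hvpos, hkey, hultG, hvltG,
    hub, hvc, hau, hav, huv⟩ := Cset_facts ht
  by_cases c1 : a < b ^^^ 2 ^ N
  · simp only [bwd, fwd, if_pos c1, e00, e10, e11, e20, e21, if_true, if_false, hub, hvc]
  · by_cases c2 : a < c ^^^ 2 ^ N
    · simp only [bwd, fwd, if_neg c1, if_pos c2, e00, e10, e11, e20, e21, if_true, if_false, hub, hvc]
    · simp only [bwd, fwd, if_neg c1, if_neg c2, e00, e10, e11, e20, e21, if_true, if_false, hub, hvc]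

theorem partC (N : ℕ) :
    (((tripSet (N+1)).filter (fun t => ¬ t.2.2 < 2 ^ N)).filter
      (fun t => ¬ t.2.1 = 2 ^ N)).card = 3 * tripCount N := by
  rw [tripCount_eq, show 3 * (tripSet N).card = (Finset.range 3 ×ˢ tripSet N).card by
    rw [Finset.card_product, Finset.card_range]]
  exact (Finset.card_bij' (fun p _ => fwd N p) (fun t _ => bwd N t)
    (fwd_mem N) (bwd_mem N) (bwd_fwd N) (fwd_bwd N)).symm

/-- Classification of the trips of the `2^{N+1}`-ions (G = `2^N`): each trip `a < b < c`
with `a XOR b = c` is of exactly one of three forms: (i) all indices below `G`;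
(ii) containing the generator `G` itself (so of the form `{a, G, G + a}`);
(iii) exactly one index below `G`, the other two being `G + x`, `G + y` with nonzero
low parts forming a trip with the low index.  Consequently
`Trip_{N+1} = Trip_N + (2^N - 1) + 3 * Trip_N`. -/
theorem trip_classification (N : ℕ) :
    (∀ a b c : ℕ, 0 < a → a < b → b < c → c < 2 ^ (N + 1) → a ^^^ b = c →
      ((c < 2 ^ N ∧ ¬b = 2 ^ N ∧
          ¬(a < 2 ^ N ∧ 2 ^ N < b ∧ 0 < b ^^^ 2 ^ N ∧ 0 < c ^^^ 2 ^ N ∧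
            a ^^^ (b ^^^ 2 ^ N) = c ^^^ 2 ^ N)) ∨
       (b = 2 ^ N ∧ c = 2 ^ N + a ∧ ¬c < 2 ^ N ∧
          ¬(a < 2 ^ N ∧ 2 ^ N < b ∧ 0 < b ^^^ 2 ^ N ∧ 0 < c ^^^ 2 ^ N ∧
            a ^^^ (b ^^^ 2 ^ N) = c ^^^ 2 ^ N)) ∨
       ((a < 2 ^ N ∧ 2 ^ N < b ∧ 0 < b ^^^ 2 ^ N ∧ 0 < c ^^^ 2 ^ N ∧
            a ^^^ (b ^^^ 2 ^ N) = c ^^^ 2 ^ N ∧ b ^^^ 2 ^ N < 2 ^ N ∧ c ^^^ 2 ^ N < 2 ^ N) ∧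
          ¬c < 2 ^ N ∧ ¬b = 2 ^ N))) ∧
    tripCount (N + 1) = tripCount N + (2 ^ N - 1) + 3 * tripCount N := by
  constructor
  · exact fun a b c ha hab hbc hc hx => classify N a b c ha hab hbc hc hx
  · have e1 : ((tripSet (N+1)).filter (fun t => t.2.2 < 2 ^ N)).card +
        ((tripSet (N+1)).filter (fun t => ¬ t.2.2 < 2 ^ N)).card = (tripSet (N+1)).card :=
      Finset.card_filter_add_card_filter_not _
    have e2 : (((tripSet (N+1)).filter (fun t => ¬ t.2.2 < 2 ^ N)).filter
          (fun t => t.2.1 = 2 ^ N)).card +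
        (((tripSet (N+1)).filter (fun t => ¬ t.2.2 < 2 ^ N)).filter
          (fun t => ¬ t.2.1 = 2 ^ N)).card =
        ((tripSet (N+1)).filter (fun t => ¬ t.2.2 < 2 ^ N)).card :=
      Finset.card_filter_add_card_filter_not _
    have eA := partA N
    have eB := partB N
    have eC := partC N
    rw [tripCount_eq (N+1), tripCount_eq N, ← e1, ← e2, eA, eB, eC, ← tripCount_eq N]
    ring
end

section
/- If a product of two dyads (e_a + s·e_A)·(e_b + t·e_B) in the 2^N-ions is zero, where a, A, b, B are distinct indices, a XOR A = b XOR B, and s, t ∈ {+1, -1}, then flipping exactly one of the signs s, t yields a nonzero product. -/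
/-- The iterated Cayley-Dickson double of ℝ: `CD n` is the `2^n`-ions. -/
def CD : ℕ → Type
  | 0 => ℝ
  | n + 1 => CD n × CD n

def CD.zero : (n : ℕ) → CD n
  | 0 => (0 : ℝ)
  | n + 1 => (CD.zero n, CD.zero n)

def CD.one : (n : ℕ) → CD n
  | 0 => (1 : ℝ)
  | n + 1 => (CD.one n, CD.zero n)

def CD.add : (n : ℕ) → CD n → CD n → CD n
  | 0, x, y => (show ℝ from x) + (show ℝ from y)
  | n + 1, (a, b), (c, d) => (CD.add n a c, CD.add n b d)

def CD.neg : (n : ℕ) → CD n → CD n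
  | 0, x => -(show ℝ from x)
  | n + 1, (a, b) => (CD.neg n a, CD.neg n b)

def CD.conj : (n : ℕ) → CD n → CD n
  | 0, x => x
  | n + 1, (a, b) => (CD.conj n a, CD.neg n b)

/-- Cayley-Dickson product: `(a,b)(c,d) = (ac - d* b, da + b c*)`. -/
def CD.mul : (n : ℕ) → CD n → CD n → CD n
  | 0, x, y => (show ℝ from x) * (show ℝ from y)
  | n + 1, (a, b), (c, d) =>
      (CD.add n (CD.mul n a c) (CD.neg n (CD.mul n (CD.conj n d) b)),
       CD.add n (CD.mul n d a) (CD.mul n b (CD.conj n c)))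

def CD.smul : (n : ℕ) → ℝ → CD n → CD n
  | 0, r, x => r * (show ℝ from x)
  | n + 1, r, (a, b) => (CD.smul n r a, CD.smul n r b)

/-- The imaginary/basis unit of index `i` (for `i < 2^n`). -/
def CD.e : (n : ℕ) → ℕ → CD n
  | 0, _ => (1 : ℝ)
  | n + 1, i =>
      if i < 2 ^ n then (CD.e n i, CD.zero n) else (CD.zero n, CD.e n (i - 2 ^ n))

instance (n : ℕ) : Zero (CD n) := ⟨CD.zero n⟩
instance (n : ℕ) : One (CD n) := ⟨CD.one n⟩
instance (n : ℕ) : Add (CD n) := ⟨CD.add n⟩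
instance (n : ℕ) : Neg (CD n) := ⟨CD.neg n⟩
instance (n : ℕ) : Sub (CD n) := ⟨fun x y => CD.add n x (CD.neg n y)⟩
instance (n : ℕ) : Mul (CD n) := ⟨CD.mul n⟩
instance (n : ℕ) : SMul ℝ (CD n) := ⟨CD.smul n⟩

namespace CD

lemma add_comm' : ∀ (n : ℕ) (x y : CD n), add n x y = add n y x
  | 0, x, y => add_comm (show ℝ from x) (show ℝ from y)
  | n+1, (a,b), (c,d) => by simp [add, add_comm' n]; rfl

lemma add_assoc' : ∀ (n : ℕ) (x y z : CD n), add n (add n x y) z = add n x (add n y z)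
  | 0, x, y, z => add_assoc (show ℝ from x) (show ℝ from y) (show ℝ from z)
  | n+1, (a,b), (c,d), (e,f) => by simp [add, add_assoc' n]; rfl

lemma add_add_add_comm' (n : ℕ) (w x y z : CD n) :
    add n (add n w x) (add n y z) = add n (add n w y) (add n x z) := by
  rw [add_assoc', add_assoc', ← add_assoc' n x, add_comm' n x y, add_assoc']

lemma zero_add' : ∀ (n : ℕ) (x : CD n), add n (zero n) x = x
  | 0, x => zero_add (show ℝ from x)
  | n+1, (a,b) => by simp [add, zero, zero_add' n]; rfl

lemma add_zero' : ∀ (n : ℕ) (x : CD n), add n x (zero n) = x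
  | 0, x => add_zero (show ℝ from x)
  | n+1, (a,b) => by simp [add, zero, add_zero' n]; rfl

lemma neg_zero' : ∀ (n : ℕ), neg n (zero n) = zero n
  | 0 => show -(0:ℝ) = (0:ℝ) by simp
  | n+1 => by simp [neg, zero, neg_zero' n]; rfl

lemma conj_zero' : ∀ (n : ℕ), conj n (zero n) = zero n
  | 0 => rfl
  | n+1 => by simp [conj, zero, conj_zero' n, neg_zero' n]; rfl

lemma smul_zero' : ∀ (n : ℕ) (r : ℝ), smul n r (zero n) = zero n
  | 0, r => mul_zero r
  | n+1, r => by simp [smul, zero, smul_zero' n]; rfl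

lemma smul_smul' : ∀ (n : ℕ) (r s : ℝ) (x : CD n), smul n r (smul n s x) = smul n (r * s) x
  | 0, r, s, x => (mul_assoc r s (show ℝ from x)).symm
  | n+1, r, s, (a,b) => by simp [smul, smul_smul' n]; rfl

lemma neg_eq_smul : ∀ (n : ℕ) (x : CD n), neg n x = smul n (-1) x
  | 0, x => (neg_one_mul (show ℝ from x)).symm
  | n+1, (a,b) => by simp [neg, smul, neg_eq_smul n]; rfl

lemma neg_smul' (n : ℕ) (r : ℝ) (x : CD n) : neg n (smul n r x) = smul n (-r) x := by
  rw [neg_eq_smul, smul_smul']; ring_nf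

lemma neg_add' : ∀ (n : ℕ) (x y : CD n), neg n (add n x y) = add n (neg n x) (neg n y)
  | 0, x, y => neg_add (show ℝ from x) (show ℝ from y)
  | n+1, (a,b), (c,d) => by simp [neg, add, neg_add' n]; rfl

lemma conj_add' : ∀ (n : ℕ) (x y : CD n), conj n (add n x y) = add n (conj n x) (conj n y)
  | 0, x, y => rfl
  | n+1, (a,b), (c,d) => by simp [conj, add, conj_add' n, neg_add' n]; rfl

lemma conj_smul' : ∀ (n : ℕ) (r : ℝ) (x : CD n), conj n (smul n r x) = smul n r (conj n x)
  | 0, r, x => rfl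
  | n+1, r, (a,b) => by
      simp [conj, smul, conj_smul' n, neg_smul' n, neg_eq_smul n, smul_smul' n, mul_comm]; rfl

lemma mul_zero_both : ∀ (n : ℕ) (x : CD n),
    mul n x (zero n) = zero n ∧ mul n (zero n) x = zero n
  | 0, x => ⟨mul_zero (show ℝ from x), zero_mul (show ℝ from x)⟩
  | n+1, (a,b) => by
      constructor <;>
      simp [mul, zero, conj_zero' n, neg_zero' n, add_zero' n, zero_add' n,
        (fun x => (mul_zero_both n x).1 : ∀ _, _),
        (fun x => (mul_zero_both n x).2 : ∀ _, _)] <;> rfl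

lemma mul_zero' (n : ℕ) (x : CD n) : mul n x (zero n) = zero n := (mul_zero_both n x).1
lemma zero_mul' (n : ℕ) (x : CD n) : mul n (zero n) x = zero n := (mul_zero_both n x).2

lemma smul_add' : ∀ (n : ℕ) (r : ℝ) (x y : CD n),
    smul n r (add n x y) = add n (smul n r x) (smul n r y)
  | 0, r, x, y => mul_add r (show ℝ from x) (show ℝ from y)
  | n+1, r, (a,b), (c,d) => by simp [smul, add, smul_add' n]; rfl

lemma smul_mul_both : ∀ (n : ℕ) (r : ℝ) (x y : CD n),
    mul n (smul n r x) y = smul n r (mul n x y) ∧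
    mul n x (smul n r y) = smul n r (mul n x y)
  | 0, r, x, y => by
      constructor
      · show (r * (show ℝ from x)) * (show ℝ from y) = r * ((show ℝ from x) * (show ℝ from y))
        ring
      · show (show ℝ from x) * (r * (show ℝ from y)) = r * ((show ℝ from x) * (show ℝ from y))
        ring
  | n+1, r, (a,b), (c,d) => by
      constructor <;>
      simp [mul, smul, neg_eq_smul n, conj_smul' n, smul_add' n, smul_smul' n,
        (fun x y => (smul_mul_both n r x y).1 : ∀ _ _, _),
        (fun x y => (smul_mul_both n r x y).2 : ∀ _ _, _),
        mul_comm, mul_left_comm, mul_assoc] <;> rfl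

lemma smul_mul' (n : ℕ) (r : ℝ) (x y : CD n) :
    mul n (smul n r x) y = smul n r (mul n x y) := (smul_mul_both n r x y).1
lemma mul_smul' (n : ℕ) (r : ℝ) (x y : CD n) :
    mul n x (smul n r y) = smul n r (mul n x y) := (smul_mul_both n r x y).2

lemma distrib_both : ∀ (n : ℕ) (x y z : CD n),
    mul n (add n x y) z = add n (mul n x z) (mul n y z) ∧
    mul n z (add n x y) = add n (mul n z x) (mul n z y)
  | 0, x, y, z => ⟨add_mul (show ℝ from x) (show ℝ from y) (show ℝ from z),
      mul_add (show ℝ from z) (show ℝ from x) (show ℝ from y)⟩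
  | n+1, (a,b), (c,d), (e,f) => by
    constructor <;>
    · simp only [mul, add, conj_add' n, neg_add' n,
        (fun x y z => (distrib_both n x y z).1 : ∀ _ _ _, _),
        (fun x y z => (distrib_both n x y z).2 : ∀ _ _ _, _),
        Prod.mk.injEq]
      exact Prod.ext (add_add_add_comm' n _ _ _ _) (add_add_add_comm' n _ _ _ _)

lemma add_mul' (n : ℕ) (x y z : CD n) :
    mul n (add n x y) z = add n (mul n x z) (mul n y z) := (distrib_both n x y z).1
lemma mul_add' (n : ℕ) (x y z : CD n) :
    mul n z (add n x y) = add n (mul n z x) (mul n z y) := (distrib_both n x y z).2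

lemma xor_two_pow {n k : ℕ} (h : k < 2 ^ n) : 2 ^ n ^^^ k = 2 ^ n + k := by
  apply Nat.eq_of_testBit_eq
  intro i
  rcases lt_trichotomy i n with hi | rfl | hi
  · rw [Nat.testBit_xor, Nat.testBit_two_pow_of_ne (by omega : n ≠ i),
      Nat.testBit_two_pow_add_gt hi]
    simp
  · rw [Nat.testBit_xor, Nat.testBit_two_pow_self, Nat.testBit_two_pow_add_eq,
      Nat.testBit_lt_two_pow h]
    simp
  · have h1 : (2:ℕ) ^ n < 2 ^ i := Nat.pow_lt_pow_right (by norm_num) hi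
    have h2 : (2:ℕ) ^ (n+1) ≤ 2 ^ i := Nat.pow_le_pow_right (by norm_num) hi
    have hp : (2:ℕ) ^ (n+1) = 2 * 2 ^ n := by rw [pow_succ]; ring
    rw [Nat.testBit_lt_two_pow (Nat.xor_lt_two_pow (by omega) (by omega)),
      Nat.testBit_lt_two_pow (by omega)]

lemma e_lo (n i : ℕ) (h : i < 2 ^ n) : e (n+1) i = (e n i, zero n) := by
  rw [e]; exact if_pos h

lemma e_hi (n i : ℕ) (h : ¬ i < 2 ^ n) : e (n+1) i = (zero n, e n (i - 2 ^ n)) := by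
  rw [e]; exact if_neg h

lemma conj_e : ∀ (n i : ℕ), i < 2 ^ n →
    ∃ ε : ℝ, (ε = 1 ∨ ε = -1) ∧ conj n (e n i) = smul n ε (e n i) := by
  intro n
  induction n with
  | zero =>
    intro i hi
    exact ⟨1, Or.inl rfl, show (1:ℝ) = 1 * 1 by ring⟩
  | succ n ih =>
    intro i hi
    by_cases h : i < 2 ^ n
    · obtain ⟨ε, hε, hc⟩ := ih i h
      refine ⟨ε, hε, ?_⟩
      rw [e_lo n i h]
      simp [conj, smul, hc, neg_zero' n, smul_zero' n]; rfl
    · refine ⟨-1, Or.inr rfl, ?_⟩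
      rw [e_hi n i h]
      simp [conj, smul, conj_zero' n, neg_eq_smul n, smul_zero' n]; rfl

lemma e_mul_e : ∀ (n i j : ℕ), i < 2 ^ n → j < 2 ^ n →
    ∃ σ : ℝ, (σ = 1 ∨ σ = -1) ∧ mul n (e n i) (e n j) = smul n σ (e n (i ^^^ j)) := by
  intro n
  induction n with
  | zero =>
    intro i j hi hj
    exact ⟨1, Or.inl rfl, show (1:ℝ) * 1 = 1 * 1 by ring⟩
  | succ n ih =>
    intro i j hi hj
    have hp : (2:ℕ) ^ (n+1) = 2 * 2 ^ n := by rw [pow_succ]; ring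
    have h2 : 0 < 2 ^ n := Nat.two_pow_pos n
    by_cases h1 : i < 2 ^ n <;> by_cases hj1 : j < 2 ^ n
    · obtain ⟨σ, hσ, hm⟩ := ih i j h1 hj1
      have hx : i ^^^ j < 2 ^ n := Nat.xor_lt_two_pow h1 hj1
      refine ⟨σ, hσ, ?_⟩
      rw [e_lo n i h1, e_lo n j hj1, e_lo n (i ^^^ j) hx]
      simp [mul, smul, hm, conj_zero' n, neg_zero' n, add_zero' n,
        zero_add' n, mul_zero' n, zero_mul' n, smul_zero' n]
      rfl
    · have hj' : j - 2 ^ n < 2 ^ n := by omega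
      obtain ⟨σ, hσ, hm⟩ := ih (j - 2 ^ n) i hj' h1
      have hxy : i ^^^ j = 2 ^ n + (i ^^^ (j - 2 ^ n)) := by
        calc i ^^^ j = i ^^^ (2 ^ n ^^^ (j - 2 ^ n)) := by
              rw [xor_two_pow hj']; congr 1; omega
          _ = 2 ^ n ^^^ (i ^^^ (j - 2 ^ n)) := by
              rw [← Nat.xor_assoc, Nat.xor_comm i (2 ^ n), Nat.xor_assoc]
          _ = 2 ^ n + (i ^^^ (j - 2 ^ n)) := xor_two_pow (Nat.xor_lt_two_pow h1 hj')
      have hge : ¬ (i ^^^ j < 2 ^ n) := by omega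
      have hsub : (i ^^^ j) - 2 ^ n = i ^^^ (j - 2 ^ n) := by omega
      refine ⟨σ, hσ, ?_⟩
      rw [e_lo n i h1, e_hi n j hj1, e_hi n (i ^^^ j) hge, hsub]
      simp [mul, smul, hm, Nat.xor_comm (j - 2 ^ n) i,
        conj_zero' n, neg_zero' n, add_zero' n, zero_add' n, mul_zero' n,
        zero_mul' n, smul_zero' n]
      rfl
    · have hi' : i - 2 ^ n < 2 ^ n := by omega
      obtain ⟨σ, hσ, hm⟩ := ih (i - 2 ^ n) j hi' hj1
      obtain ⟨ε, hε, hc⟩ := conj_e n j hj1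
      have hxy : i ^^^ j = 2 ^ n + ((i - 2 ^ n) ^^^ j) := by
        calc i ^^^ j = (2 ^ n ^^^ (i - 2 ^ n)) ^^^ j := by
              rw [xor_two_pow hi']; congr 1; omega
          _ = 2 ^ n ^^^ ((i - 2 ^ n) ^^^ j) := Nat.xor_assoc _ _ _
          _ = 2 ^ n + ((i - 2 ^ n) ^^^ j) := xor_two_pow (Nat.xor_lt_two_pow hi' hj1)
      have hge : ¬ (i ^^^ j < 2 ^ n) := by omega
      have hsub : (i ^^^ j) - 2 ^ n = (i - 2 ^ n) ^^^ j := by omega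
      refine ⟨ε * σ, by rcases hε with rfl | rfl <;> rcases hσ with rfl | rfl <;> norm_num, ?_⟩
      rw [e_hi n i h1, e_lo n j hj1, e_hi n (i ^^^ j) hge, hsub]
      simp [mul, smul, hc, mul_smul' n, hm, smul_smul' n,
        conj_zero' n, neg_zero' n, add_zero' n, zero_add' n, mul_zero' n,
        zero_mul' n, smul_zero' n]
      rfl
    · have hi' : i - 2 ^ n < 2 ^ n := by omega
      have hj' : j - 2 ^ n < 2 ^ n := by omega
      obtain ⟨σ, hσ, hm⟩ := ih (j - 2 ^ n) (i - 2 ^ n) hj' hi'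
      obtain ⟨ε, hε, hc⟩ := conj_e n (j - 2 ^ n) hj'
      have hxy : i ^^^ j = (i - 2 ^ n) ^^^ (j - 2 ^ n) := by
        calc i ^^^ j = (2 ^ n ^^^ (i - 2 ^ n)) ^^^ (2 ^ n ^^^ (j - 2 ^ n)) := by
              rw [xor_two_pow hi', xor_two_pow hj']; congr 1 <;> omega
          _ = (i - 2 ^ n) ^^^ (2 ^ n ^^^ (2 ^ n ^^^ (j - 2 ^ n))) := by
              rw [Nat.xor_comm (2 ^ n) (i - 2 ^ n), Nat.xor_assoc]
          _ = (i - 2 ^ n) ^^^ (j - 2 ^ n) := by rw [Nat.xor_xor_cancel_left]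
      have hlt : (i - 2 ^ n) ^^^ (j - 2 ^ n) < 2 ^ n := Nat.xor_lt_two_pow hi' hj'
      refine ⟨-(ε * σ), by rcases hε with rfl | rfl <;> rcases hσ with rfl | rfl <;> norm_num, ?_⟩
      rw [e_hi n i h1, e_hi n j hj1, hxy, e_lo n ((i - 2 ^ n) ^^^ (j - 2 ^ n)) hlt]
      simp [mul, smul, hc, smul_mul' n, hm, smul_smul' n, neg_smul' n,
        Nat.xor_comm (j - 2 ^ n) (i - 2 ^ n),
        conj_zero' n, neg_zero' n, add_zero' n, zero_add' n, mul_zero' n,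
        zero_mul' n, smul_zero' n]
      rfl

def coordAux : (n : ℕ) → CD n → ℕ → ℝ
  | 0, x, _ => x
  | n + 1, (a, b), j => if j < 2 ^ n then coordAux n a j else coordAux n b (j - 2 ^ n)

lemma coord_add : ∀ (n : ℕ) (x y : CD n) (j : ℕ),
    coordAux n (add n x y) j = coordAux n x j + coordAux n y j
  | 0, x, y, _ => rfl
  | n+1, (a,b), (c,d), j => by
      by_cases h : j < 2 ^ n <;> simp [coordAux, add, h, coord_add n]

lemma coord_smul : ∀ (n : ℕ) (r : ℝ) (x : CD n) (j : ℕ),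
    coordAux n (smul n r x) j = r * coordAux n x j
  | 0, r, x, _ => rfl
  | n+1, r, (a,b), j => by
      by_cases h : j < 2 ^ n <;> simp [coordAux, smul, h, coord_smul n]

lemma coord_zero : ∀ (n j : ℕ), coordAux n (zero n) j = 0
  | 0, _ => rfl
  | n+1, j => by
      by_cases h : j < 2 ^ n <;> simp [coordAux, zero, h, coord_zero n]

lemma coord_e : ∀ (n i j : ℕ), i < 2 ^ n → j < 2 ^ n →
    coordAux n (e n i) j = if i = j then 1 else 0
  | 0, i, j, hi, hj => by
      have hi0 : i = 0 := by omega
      have hj0 : j = 0 := by omega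
      subst hi0; subst hj0
      simp [coordAux, e]
  | n+1, i, j, hi, hj => by
      have hp : (2:ℕ) ^ (n+1) = 2 * 2 ^ n := by rw [pow_succ]; ring
      by_cases h1 : i < 2 ^ n <;> by_cases h2 : j < 2 ^ n
      · rw [e_lo n i h1]
        simp [coordAux, h2, coord_e n i j h1 h2]
      · rw [e_lo n i h1]
        simp [coordAux, h2, coord_zero n, show i ≠ j by omega]
      · rw [e_hi n i h1]
        simp [coordAux, h2, coord_zero n, show i ≠ j by omega]
      · rw [e_hi n i h1]
        simp only [coordAux, if_neg h2,
          coord_e n (i - 2 ^ n) (j - 2 ^ n) (by omega) (by omega)]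
        by_cases hij : i = j
        · simp [hij]
        · rw [if_neg (show ¬ (i - 2 ^ n = j - 2 ^ n) by omega), if_neg hij]

end CD

/-- Paper's Theorem 3: if the product of two dyads `(e_a + s e_A)(e_b + t e_B)` in the
`2^N`-ions vanishes (indices distinct, `a XOR A = b XOR B`, signs `s, t = ±1`), then
flipping exactly one of the two signs yields a nonzero product. -/
theorem flip_one_sign_nonzero (N a A b B : ℕ)
    (ha : 0 < a) (hA : 0 < A) (hb : 0 < b) (hB : 0 < B)
    (haN : a < 2 ^ N) (hAN : A < 2 ^ N) (hbN : b < 2 ^ N) (hBN : B < 2 ^ N)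
    (hab : a ≠ A) (hab2 : a ≠ b) (hab3 : a ≠ B) (hab4 : A ≠ b) (hab5 : A ≠ B)
    (hab6 : b ≠ B) (hxor : a ^^^ A = b ^^^ B)
    (s t : ℝ) (hs : s = 1 ∨ s = -1) (ht : t = 1 ∨ t = -1)
    (hzero : (CD.e N a + s • CD.e N A) * (CD.e N b + t • CD.e N B) = 0) :
    (CD.e N a + (-s) • CD.e N A) * (CD.e N b + t • CD.e N B) ≠ 0 ∧
    (CD.e N a + s • CD.e N A) * (CD.e N b + (-t) • CD.e N B) ≠ 0 := by
  have hAB : A ^^^ B = a ^^^ b := by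
    calc A ^^^ B = (a ^^^ (a ^^^ A)) ^^^ B := by rw [Nat.xor_xor_cancel_left]
      _ = (a ^^^ (b ^^^ B)) ^^^ B := by rw [hxor]
      _ = a ^^^ b := by rw [Nat.xor_assoc, Nat.xor_assoc, Nat.xor_self, Nat.xor_zero]
  have hAb : A ^^^ b = a ^^^ B := by
    calc A ^^^ b = (a ^^^ (b ^^^ B)) ^^^ b := by rw [← hxor, Nat.xor_xor_cancel_left]
      _ = a ^^^ B := by
        rw [Nat.xor_comm b B, Nat.xor_assoc, Nat.xor_assoc, Nat.xor_self, Nat.xor_zero]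
  have hXN : a ^^^ b < 2 ^ N := Nat.xor_lt_two_pow haN hbN
  have hYN : a ^^^ B < 2 ^ N := Nat.xor_lt_two_pow haN hBN
  have hXY : a ^^^ B ≠ a ^^^ b := fun h => hab6 (Nat.xor_right_inj.mp h.symm)
  obtain ⟨σ1, hσ1, hm1⟩ := CD.e_mul_e N a b haN hbN
  obtain ⟨σ2, hσ2, hm2⟩ := CD.e_mul_e N a B haN hBN
  obtain ⟨σ3, hσ3, hm3⟩ := CD.e_mul_e N A b hAN hbN
  obtain ⟨σ4, hσ4, hm4⟩ := CD.e_mul_e N A B hAN hBN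
  rw [hAb] at hm3
  rw [hAB] at hm4
  have key : ∀ u v : ℝ,
      CD.coordAux N (CD.mul N (CD.add N (CD.e N a) (CD.smul N u (CD.e N A)))
        (CD.add N (CD.e N b) (CD.smul N v (CD.e N B)))) (a ^^^ b)
      = σ1 + u * (v * σ4) := by
    intro u v
    rw [CD.mul_add', CD.add_mul', CD.add_mul']
    simp only [CD.mul_smul', CD.smul_mul']
    rw [hm1, hm2, hm3, hm4]
    simp only [CD.smul_smul', CD.coord_add, CD.coord_smul]
    rw [CD.coord_e N (a ^^^ b) (a ^^^ b) hXN hXN, CD.coord_e N (a ^^^ B) (a ^^^ b) hYN hXN]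
    rw [if_pos rfl, if_neg hXY]
    ring
  have hz : σ1 + s * (t * σ4) = 0 := by
    have hzero' : CD.mul N (CD.add N (CD.e N a) (CD.smul N s (CD.e N A)))
        (CD.add N (CD.e N b) (CD.smul N t (CD.e N B))) = CD.zero N := hzero
    have h0 := congrArg (fun z => CD.coordAux N z (a ^^^ b)) hzero'
    simpa [key s t, CD.coord_zero] using h0
  constructor
  · intro h
    have h' : CD.mul N (CD.add N (CD.e N a) (CD.smul N (-s) (CD.e N A)))
        (CD.add N (CD.e N b) (CD.smul N t (CD.e N B))) = CD.zero N := h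
    have h0 := congrArg (fun z => CD.coordAux N z (a ^^^ b)) h'
    have h2 : σ1 + (-s) * (t * σ4) = 0 := by
      simpa [key (-s) t, CD.coord_zero] using h0
    have hσ0 : σ1 = 0 := by linarith
    rcases hσ1 with rfl | rfl <;> norm_num at hσ0
  · intro h
    have h' : CD.mul N (CD.add N (CD.e N a) (CD.smul N s (CD.e N A)))
        (CD.add N (CD.e N b) (CD.smul N (-t) (CD.e N B))) = CD.zero N := h
    have h0 := congrArg (fun z => CD.coordAux N z (a ^^^ b)) h'
    have h2 : σ1 + s * ((-t) * σ4) = 0 := by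
      simpa [key s (-t), CD.coord_zero] using h0
    have hσ0 : σ1 = 0 := by linarith
    rcases hσ1 with rfl | rfl <;> norm_num at hσ0
end
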